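/- arXiv:1706.01865 — 2 statements merged into one kernel-verified Lean document; each statement's English description precedes it below -/
import Mathlib

section
/- If ρ : ℝ × D → ℝ is jointly convex in (r,θ), nonnegative, and for each θ ∈ D the integral n_c(θ) = ∫_ℝ exp(-ρ(r;θ)) dr is finite, then θ ↦ log n_c(θ) is concave on the convex set D. -/
/-!
Fix `θ₀ θ₁ ∈ D` and weights `a + b = 1`. Joint convexity gives
`exp (-ρ (a x + b y) (a θ₀ + b θ₁)) ≥ exp (-ρ x θ₀) ^ a * exp (-ρ y θ₁) ^ b`, so the
one-dimensional Prékopa–Leindler inequality yields `n_c (a θ₀ + b θ₁) ≥ n_c θ₀ ^ a * n_c θ₁ ^ b`,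
which is the concavity of `log n_c`.

Prékopa–Leindler is proved level by level through the layer-cake formula. Once the suprema of
`f` and `g` are normalised to `1`, their strict superlevel sets at a level `s < 1` are nonempty
intervals (by quasiconcavity) whose weighted Minkowski combination lies in the superlevel set of
`h`; the one-dimensional Brunn–Minkowski inequality `vol A + vol B ≤ vol (A + B)` for intervals
then gives `a ∫ f + b ∫ g ≤ ∫ h`, and weighted AM–GM finishes.
-/

open MeasureTheory Set Metric
open scoped ENNReal Pointwise

namespace Real

theorem volume_eq_ediam_of_ordConnected {s : Set ℝ} (hs : s.OrdConnected) :
    volume s = ediam s := by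
  refine le_antisymm (volume_le_diam s) (ediam_le fun x hx y hy => ?_)
  wlog hxy : x ≤ y generalizing x y
  · rw [edist_comm]; exact this y hy x hx (le_of_not_ge hxy)
  calc edist x y = volume (Icc x y) := by
        rw [volume_Icc, edist_dist, dist_comm, dist_eq, abs_of_nonneg (sub_nonneg.2 hxy)]
    _ ≤ volume s := measure_mono (hs.out hx hy)

theorem volume_add_volume_le_volume_add {s t : Set ℝ} (hs : s.OrdConnected) (ht : t.OrdConnected)
    (hs₀ : s.Nonempty) (ht₀ : t.Nonempty) : volume s + volume t ≤ volume (s + t) := by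
  have hst : (s + t).OrdConnected := (hs.convex.add ht.convex).ordConnected
  rw [volume_eq_ediam_of_ordConnected hs, volume_eq_ediam_of_ordConnected ht,
    volume_eq_ediam_of_ordConnected hst]
  refine ENNReal.biSup_add_biSup_le hs₀ ht₀ fun x hx y hy =>
    ENNReal.biSup_add_biSup_le hs₀ ht₀ fun x' hx' y' hy' => ?_
  -- the lower and the upper endpoints add up to two points of `s + t` at distance
  -- `|x - x'| + |y - y'|`
  have hmin : min x x' + min y y' ∈ s + t :=
    add_mem_add (min_rec' (· ∈ s) hx hx') (min_rec' (· ∈ t) hy hy')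
  have hmax : max x x' + max y y' ∈ s + t :=
    add_mem_add (max_rec' (· ∈ s) hx hx') (max_rec' (· ∈ t) hy hy')
  calc edist x x' + edist y y'
      = edist (min x x' + min y y') (max x x' + max y y') := by
        rw [edist_dist, edist_dist, edist_dist, dist_eq, dist_eq, dist_eq,
          ← ENNReal.ofReal_add (abs_nonneg _) (abs_nonneg _), abs_sub_comm (min x x' + _),
          abs_of_nonneg (a := max x x' + max y y' - (min x x' + min y y'))
            (by linarith [min_le_max (a := x) (b := x'), min_le_max (a := y) (b := y')]),
          ← max_sub_min_eq_abs' x x', ← max_sub_min_eq_abs' y y']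
        ring_nf
    _ ≤ ediam (s + t) := edist_le_ediam_of_mem hmin hmax

theorem ofReal_mul_volume_add_ofReal_mul_volume_le {s t u : Set ℝ} (hs : s.OrdConnected)
    (ht : t.OrdConnected) (hs₀ : s.Nonempty) (ht₀ : t.Nonempty) {a b : ℝ} (ha : 0 ≤ a)
    (hb : 0 ≤ b) (hu : a • s + b • t ⊆ u) :
    ENNReal.ofReal a * volume s + ENNReal.ofReal b * volume t ≤ volume u :=
  calc ENNReal.ofReal a * volume s + ENNReal.ofReal b * volume t
      = volume (a • s) + volume (b • t) := by
        simp only [Measure.addHaar_smul, Module.finrank_self, pow_one, abs_of_nonneg ha,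
          abs_of_nonneg hb]
    _ ≤ volume (a • s + b • t) :=
        volume_add_volume_le_volume_add ((hs.convex.smul a).ordConnected)
          ((ht.convex.smul b).ordConnected) (hs₀.smul_set) (ht₀.smul_set)
    _ ≤ volume u := measure_mono hu

end Real

section PrekopaLeindler

variable {f g h : ℝ → ℝ} {a b : ℝ}

theorem smul_superlevel_add_smul_superlevel_subset (ha : 0 < a) (hb : 0 < b) (hab : a + b = 1)
    (hfgh : ∀ x y, f x ^ a * g y ^ b ≤ h (a * x + b * y)) {s : ℝ} (hs : 0 ≤ s) :
    a • {x | s < f x} + b • {y | s < g y} ⊆ {z | s < h z} := by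
  rintro _ ⟨_, ⟨x, hx, rfl⟩, _, ⟨y, hy, rfl⟩, rfl⟩
  calc s = s ^ a * s ^ b := by rw [← Real.rpow_add_of_nonneg hs ha.le hb.le, hab, Real.rpow_one]
    _ < f x ^ a * g y ^ b :=
        mul_lt_mul'' (Real.rpow_lt_rpow hs hx ha) (Real.rpow_lt_rpow hs hy hb)
          (Real.rpow_nonneg hs a) (Real.rpow_nonneg hs b)
    _ ≤ h (a * x + b * y) := hfgh x y

theorem superlevel_nonempty_of_isLUB (hf : IsLUB (range f) 1) {s : ℝ} (hs : s < 1) :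
    {x | s < f x}.Nonempty := by
  obtain ⟨_, ⟨x, rfl⟩, hx⟩ := (lt_isLUB_iff hf).1 hs
  exact ⟨x, hx⟩

theorem superlevel_eq_empty_of_isLUB (hf : IsLUB (range f) 1) {s : ℝ} (hs : 1 ≤ s) :
    {x | s < f x} = ∅ :=
  eq_empty_of_forall_notMem fun x hx => ((hf.1 (mem_range_self x)).trans hs).not_gt hx

theorem ofReal_mul_volume_superlevel_add_le (ha : 0 < a) (hb : 0 < b) (hab : a + b = 1)
    (hf : QuasiconcaveOn ℝ univ f) (hg : QuasiconcaveOn ℝ univ g)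
    (hf₁ : IsLUB (range f) 1) (hg₁ : IsLUB (range g) 1)
    (hfgh : ∀ x y, f x ^ a * g y ^ b ≤ h (a * x + b * y)) {s : ℝ} (hs : 0 < s) :
    ENNReal.ofReal a * volume {x | s < f x} + ENNReal.ofReal b * volume {y | s < g y}
      ≤ volume {z | s < h z} := by
  rcases lt_or_ge s 1 with hs₁ | hs₁
  · have hfs : Convex ℝ {x | s < f x} := by simpa using hf.convex_gt s
    have hgs : Convex ℝ {y | s < g y} := by simpa using hg.convex_gt s
    exact Real.ofReal_mul_volume_add_ofReal_mul_volume_le hfs.ordConnected hgs.ordConnected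
      (superlevel_nonempty_of_isLUB hf₁ hs₁) (superlevel_nonempty_of_isLUB hg₁ hs₁) ha.le hb.le
      (smul_superlevel_add_smul_superlevel_subset ha hb hab hfgh hs.le)
  · simp [superlevel_eq_empty_of_isLUB hf₁ hs₁, superlevel_eq_empty_of_isLUB hg₁ hs₁]

theorem ofReal_mul_lintegral_add_ofReal_mul_lintegral_le (ha : 0 < a) (hb : 0 < b)
    (hab : a + b = 1) (hf : QuasiconcaveOn ℝ univ f) (hg : QuasiconcaveOn ℝ univ g)
    (hf₁ : IsLUB (range f) 1) (hg₁ : IsLUB (range g) 1) (hf₀ : 0 ≤ f) (hg₀ : 0 ≤ g)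
    (hh₀ : 0 ≤ h) (hfm : AEMeasurable f) (hgm : AEMeasurable g) (hhm : AEMeasurable h)
    (hfgh : ∀ x y, f x ^ a * g y ^ b ≤ h (a * x + b * y)) :
    ENNReal.ofReal a * (∫⁻ x, ENNReal.ofReal (f x))
      + ENNReal.ofReal b * ∫⁻ y, ENNReal.ofReal (g y) ≤ ∫⁻ z, ENNReal.ofReal (h z) := by
  have hmeas : ∀ φ : ℝ → ℝ, Measurable fun s => volume {x | s < φ x} := fun φ =>
    Antitone.measurable fun s t hst => measure_mono fun x hx => hst.trans_lt hx
  rw [lintegral_eq_lintegral_meas_lt volume (.of_forall hf₀) hfm,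
    lintegral_eq_lintegral_meas_lt volume (.of_forall hg₀) hgm,
    lintegral_eq_lintegral_meas_lt volume (.of_forall hh₀) hhm,
    ← lintegral_const_mul _ (hmeas f), ← lintegral_const_mul _ (hmeas g),
    ← lintegral_add_left ((hmeas f).const_mul _)]
  exact setLIntegral_mono (hmeas h) fun s hs =>
    ofReal_mul_volume_superlevel_add_le ha hb hab hf hg hf₁ hg₁ hfgh hs

theorem integral_rpow_mul_integral_rpow_le_of_isLUB_one (ha : 0 < a) (hb : 0 < b)
    (hab : a + b = 1) (hf : QuasiconcaveOn ℝ univ f) (hg : QuasiconcaveOn ℝ univ g)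
    (hf₁ : IsLUB (range f) 1) (hg₁ : IsLUB (range g) 1) (hf₀ : 0 ≤ f) (hg₀ : 0 ≤ g)
    (hh₀ : 0 ≤ h) (hfi : Integrable f) (hgi : Integrable g) (hhi : Integrable h)
    (hfgh : ∀ x y, f x ^ a * g y ^ b ≤ h (a * x + b * y)) :
    (∫ x, f x) ^ a * (∫ y, g y) ^ b ≤ ∫ z, h z := by
  have hlin : a * (∫ x, f x) + b * ∫ y, g y ≤ ∫ z, h z := by
    have := ofReal_mul_lintegral_add_ofReal_mul_lintegral_le ha hb hab hf hg hf₁ hg₁ hf₀ hg₀ hh₀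
      hfi.aemeasurable hgi.aemeasurable hhi.aemeasurable hfgh
    rwa [← ofReal_integral_eq_lintegral_ofReal hfi (.of_forall hf₀),
      ← ofReal_integral_eq_lintegral_ofReal hgi (.of_forall hg₀),
      ← ofReal_integral_eq_lintegral_ofReal hhi (.of_forall hh₀),
      ← ENNReal.ofReal_mul ha.le, ← ENNReal.ofReal_mul hb.le,
      ← ENNReal.ofReal_add (mul_nonneg ha.le (integral_nonneg hf₀))
        (mul_nonneg hb.le (integral_nonneg hg₀)),
      ENNReal.ofReal_le_ofReal_iff (integral_nonneg hh₀)] at this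
  exact (Real.geom_mean_le_arith_mean2_weighted ha.le hb.le (integral_nonneg hf₀)
    (integral_nonneg hg₀) hab).trans hlin

theorem isLUB_range_div_iSup (hfb : BddAbove (range f)) (hpos : 0 < ⨆ x, f x) :
    IsLUB (range fun x => f x / ⨆ x, f x) 1 := by
  refine ⟨?_, fun c hc => ?_⟩
  · rintro _ ⟨x, rfl⟩
    exact (div_le_one hpos).2 (le_ciSup hfb x)
  · by_contra! hc₁
    obtain ⟨x, hx⟩ := exists_lt_of_lt_ciSup (mul_lt_of_lt_one_left hpos hc₁)
    exact (hc ⟨x, rfl⟩).not_gt ((lt_div_iff₀ hpos).2 hx)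

theorem integral_eq_zero_of_iSup_nonpos (hf₀ : 0 ≤ f) (hfb : BddAbove (range f))
    (hM : ¬ 0 < ⨆ x, f x) : ∫ x, f x = 0 := by
  have : f = 0 := funext fun x => le_antisymm ((le_ciSup hfb x).trans (not_lt.1 hM)) (hf₀ x)
  simp [this]

theorem integral_rpow_mul_integral_rpow_le (ha : 0 < a) (hb : 0 < b) (hab : a + b = 1)
    (hf : QuasiconcaveOn ℝ univ f) (hg : QuasiconcaveOn ℝ univ g) (hf₀ : 0 ≤ f) (hg₀ : 0 ≤ g)
    (hfb : BddAbove (range f)) (hgb : BddAbove (range g))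
    (hfi : Integrable f) (hgi : Integrable g) (hhi : Integrable h)
    (hfgh : ∀ x y, f x ^ a * g y ^ b ≤ h (a * x + b * y)) :
    (∫ x, f x) ^ a * (∫ y, g y) ^ b ≤ ∫ z, h z := by
  have hh₀ : 0 ≤ h := fun z => by
    simpa [← add_mul, hab] using (mul_nonneg (Real.rpow_nonneg (hf₀ z) a)
      (Real.rpow_nonneg (hg₀ z) b)).trans (hfgh z z)
  set M := ⨆ x, f x
  set N := ⨆ y, g y
  by_cases hM : 0 < M
  swap
  · rw [integral_eq_zero_of_iSup_nonpos hf₀ hfb hM, Real.zero_rpow ha.ne', zero_mul]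
    exact integral_nonneg hh₀
  by_cases hN : 0 < N
  swap
  · rw [integral_eq_zero_of_iSup_nonpos hg₀ hgb hN, Real.zero_rpow hb.ne', mul_zero]
    exact integral_nonneg hh₀
  have hc : 0 < M ^ a * N ^ b := by positivity
  -- rescaling `f`, `g` to supremum `1` and `h` by `M ^ a * N ^ b` preserves `hfgh`
  have := integral_rpow_mul_integral_rpow_le_of_isLUB_one (f := fun x => f x / M)
    (g := fun y => g y / N) (h := fun z => h z / (M ^ a * N ^ b)) ha hb hab
    (hf.monotone_comp fun _ _ hst => div_le_div_of_nonneg_right hst hM.le)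
    (hg.monotone_comp fun _ _ hst => div_le_div_of_nonneg_right hst hN.le)
    (isLUB_range_div_iSup hfb hM) (isLUB_range_div_iSup hgb hN)
    (fun x => div_nonneg (hf₀ x) hM.le) (fun y => div_nonneg (hg₀ y) hN.le)
    (fun z => div_nonneg (hh₀ z) hc.le) (hfi.div_const M) (hgi.div_const N) (hhi.div_const _)
    fun x y => by
      rw [Real.div_rpow (hf₀ x) hM.le, Real.div_rpow (hg₀ y) hN.le, div_mul_div_comm]
      exact div_le_div_of_nonneg_right (hfgh x y) hc.le
  rwa [integral_div, integral_div, integral_div, Real.div_rpow (integral_nonneg hf₀) hM.le,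
    Real.div_rpow (integral_nonneg hg₀) hN.le, div_mul_div_comm,
    div_le_div_iff_of_pos_right hc] at this

end PrekopaLeindler

section JointlyConvex

variable {E : Type*} [AddCommGroup E] [Module ℝ E] {D : Set E} {ρ : ℝ → E → ℝ}

theorem ConvexOn.apply_combo_le_of_prod
    (hρ : ConvexOn ℝ (univ ×ˢ D) fun p => ρ p.1 p.2) {θ₀ θ₁ : E} (h₀ : θ₀ ∈ D) (h₁ : θ₁ ∈ D)
    {a b : ℝ} (ha : 0 ≤ a) (hb : 0 ≤ b) (hab : a + b = 1) (x y : ℝ) :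
    ρ (a * x + b * y) (a • θ₀ + b • θ₁) ≤ a * ρ x θ₀ + b * ρ y θ₁ := by
  simpa using hρ.2 (x := (x, θ₀)) (y := (y, θ₁)) ⟨mem_univ x, h₀⟩ ⟨mem_univ y, h₁⟩ ha hb hab

theorem ConvexOn.quasiconcaveOn_exp_neg_of_prod
    (hρ : ConvexOn ℝ (univ ×ˢ D) fun p => ρ p.1 p.2) {θ : E} (hθ : θ ∈ D) :
    QuasiconcaveOn ℝ univ fun r => Real.exp (-ρ r θ) := by
  have hslice : ConvexOn ℝ univ (ρ · θ) := ⟨convex_univ, fun x _ y _ a b ha hb hab => by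
    simpa [Convex.combo_self hab] using hρ.apply_combo_le_of_prod hθ hθ ha hb hab x y⟩
  have hexp : Antitone fun t : ℝ => Real.exp (-t) := fun _ _ hst =>
    Real.exp_le_exp.2 (neg_le_neg hst)
  exact (hslice.quasiconvexOn.antitone_comp hexp :)

theorem ConvexOn.integral_exp_neg_rpow_mul_le_of_prod
    (hρ : ConvexOn ℝ (univ ×ˢ D) fun p => ρ p.1 p.2) (hρ₀ : ∀ r θ, 0 ≤ ρ r θ)
    (hint : ∀ θ ∈ D, Integrable fun r => Real.exp (-ρ r θ)) {θ₀ θ₁ : E} (h₀ : θ₀ ∈ D)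
    (h₁ : θ₁ ∈ D) {a b : ℝ} (ha : 0 < a) (hb : 0 < b) (hab : a + b = 1)
    (h₂ : a • θ₀ + b • θ₁ ∈ D) :
    (∫ r, Real.exp (-ρ r θ₀)) ^ a * (∫ r, Real.exp (-ρ r θ₁)) ^ b
      ≤ ∫ r, Real.exp (-ρ r (a • θ₀ + b • θ₁)) := by
  have hbdd : ∀ θ, BddAbove (range fun r => Real.exp (-ρ r θ)) := fun θ =>
    ⟨1, by rintro _ ⟨r, rfl⟩; exact Real.exp_le_one_iff.2 (neg_nonpos.2 (hρ₀ r θ))⟩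
  refine integral_rpow_mul_integral_rpow_le ha hb hab (hρ.quasiconcaveOn_exp_neg_of_prod h₀)
    (hρ.quasiconcaveOn_exp_neg_of_prod h₁) (fun _ => (Real.exp_pos _).le)
    (fun _ => (Real.exp_pos _).le) (hbdd θ₀) (hbdd θ₁) (hint θ₀ h₀) (hint θ₁ h₁) (hint _ h₂)
    fun x y => ?_
  rw [← Real.exp_mul, ← Real.exp_mul, ← Real.exp_add, Real.exp_le_exp]
  linarith [hρ.apply_combo_le_of_prod h₀ h₁ ha.le hb.le hab x y]

end JointlyConvex

theorem log_nc_concave_of_jointly_convex {k : ℕ} (D : Set (Fin k → ℝ)) (hD : Convex ℝ D)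
    (ρ : ℝ → (Fin k → ℝ) → ℝ)
    (hconv : ConvexOn ℝ ((Set.univ : Set ℝ) ×ˢ D) (fun p => ρ p.1 p.2))
    (hnonneg : ∀ r θ, 0 ≤ ρ r θ)
    (hint : ∀ θ ∈ D, Integrable (fun r : ℝ => Real.exp (-ρ r θ))) :
    ConcaveOn ℝ D (fun θ => Real.log (∫ r : ℝ, Real.exp (-ρ r θ))) := by
  refine concaveOn_iff_forall_pos.2 ⟨hD, fun θ₀ h₀ θ₁ h₁ a b ha hb hab => ?_⟩
  have hI₀ := integral_exp_pos (hint θ₀ h₀)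
  have hI₁ := integral_exp_pos (hint θ₁ h₁)
  calc a • Real.log (∫ r, Real.exp (-ρ r θ₀)) + b • Real.log (∫ r, Real.exp (-ρ r θ₁))
      = Real.log ((∫ r, Real.exp (-ρ r θ₀)) ^ a * (∫ r, Real.exp (-ρ r θ₁)) ^ b) := by
        rw [Real.log_mul (by positivity) (by positivity), Real.log_rpow hI₀, Real.log_rpow hI₁,
          smul_eq_mul, smul_eq_mul]
    _ ≤ Real.log (∫ r, Real.exp (-ρ r (a • θ₀ + b • θ₁))) :=
        Real.log_le_log (by positivity) (hconv.integral_exp_neg_rpow_mul_le_of_prod hnonneg hint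
          h₀ h₁ ha hb hab (hD h₀ h₁ ha.le hb.le hab))
end

section
/- The quantile Huber penalty ρ(r) defined as -τκr - (τκ)²/2 for r < -τκ, r²/2 for -τκ ≤ r ≤ (1-τ)κ, and (1-τ)κr - ((1-τ)κ)²/2 for r > (1-τ)κ, equals sup over u ∈ [-κτ, κ(1-τ)] of (ur - u²/2). -/
/-!
Writing `u * r - u ^ 2 / 2 = (r ^ 2 - (u - r) ^ 2) / 2`, the supremum over `u ∈ [a, b]` is attained
at the point of `[a, b]` closest to `r`, namely its projection `Set.projIcc a b r`. For the
quantile-Huber interval `[-κτ, κ(1 - τ)]` this projection is `-τκ`, `r` or `(1 - τ)κ` according to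
the three branches of the penalty.
-/

open Set

namespace Set

variable {α : Type*} [Ring α] [LinearOrder α] [IsStrictOrderedRing α] {a b : α}

lemma sub_projIcc_mul_sub_projIcc_nonpos (h : a ≤ b) (r : α) {u : α} (hu : u ∈ Icc a b) :
    (u - projIcc a b h r) * (r - projIcc a b h r) ≤ 0 := by
  rcases le_total r a with hra | har
  · rw [projIcc_of_le_left h hra]
    exact mul_nonpos_of_nonneg_of_nonpos (sub_nonneg.2 hu.1) (sub_nonpos.2 hra)
  rcases le_total b r with hbr | hrb
  · rw [projIcc_of_right_le h hbr]
    exact mul_nonpos_of_nonpos_of_nonneg (sub_nonpos.2 hu.2) (sub_nonneg.2 hbr)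
  · simp [projIcc_of_mem h ⟨har, hrb⟩]

end Set

lemma mul_sub_sq_div_two_le_projIcc {a b : ℝ} (h : a ≤ b) (r : ℝ) {u : ℝ} (hu : u ∈ Icc a b) :
    u * r - u ^ 2 / 2 ≤ projIcc a b h r * r - (projIcc a b h r : ℝ) ^ 2 / 2 := by
  nlinarith [sub_projIcc_mul_sub_projIcc_nonpos h r hu, sq_nonneg (u - projIcc a b h r)]

lemma iSup_Icc_mul_sub_sq_div_two {a b : ℝ} (h : a ≤ b) (r : ℝ) :
    ⨆ u : Icc a b, ((u : ℝ) * r - (u : ℝ) ^ 2 / 2) =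
      projIcc a b h r * r - (projIcc a b h r : ℝ) ^ 2 / 2 := by
  have : Nonempty (Icc a b) := (nonempty_Icc.2 h).to_subtype
  have hle (u : Icc a b) := mul_sub_sq_div_two_le_projIcc h r u.2
  exact le_antisymm (ciSup_le hle) (le_ciSup ⟨_, forall_mem_range.2 hle⟩ (projIcc a b h r))

theorem quantile_huber_conjugate_rep_general (τ κ : ℝ) (hκ : 0 < κ)
    (r : ℝ) :
    (if r < -(τ * κ) then -(τ * κ) * r - (τ * κ) ^ 2 / 2
     else if r ≤ (1 - τ) * κ then r ^ 2 / 2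
     else (1 - τ) * κ * r - ((1 - τ) * κ) ^ 2 / 2) =
      ⨆ u : Set.Icc (-(κ * τ)) (κ * (1 - τ)), ((u : ℝ) * r - (u : ℝ) ^ 2 / 2) := by
  have h : -(κ * τ) ≤ κ * (1 - τ) := by linarith
  rw [iSup_Icc_mul_sub_sq_div_two h]
  split_ifs with hlow hhigh
  · rw [projIcc_of_le_left h (by linarith)]
    ring
  · rw [projIcc_of_mem h ⟨by linarith, by linarith⟩]
    ring
  · rw [projIcc_of_right_le h (by linarith)]
    ring

theorem quantile_huber_conjugate_rep (τ κ : ℝ) (hτ0 : 0 < τ) (hτ1 : τ < 1) (hκ : 0 < κ)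
    (r : ℝ) :
    (if r < -(τ * κ) then -(τ * κ) * r - (τ * κ) ^ 2 / 2
     else if r ≤ (1 - τ) * κ then r ^ 2 / 2
     else (1 - τ) * κ * r - ((1 - τ) * κ) ^ 2 / 2) =
      ⨆ u : Set.Icc (-(κ * τ)) (κ * (1 - τ)), ((u : ℝ) * r - (u : ℝ) ^ 2 / 2) :=
  quantile_huber_conjugate_rep_general τ κ hκ r
end
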